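/- Let a < x2 < x3 and ȳ1 < ȳ2 < ȳ3 be real numbers, set m1 = (ȳ2−ȳ1)/(x2−a) and m2 = (ȳ3−ȳ1)/(x3−a), and assume m1 > m2 and (ȳ3−ȳ2) − a·(m1−m2) ≠ 0. Define θ̂0 = ȳ1 − a·m1·m2·(x3−x2)/[(ȳ3−ȳ2) − a·(m1−m2)], θ̂1 = m1·m2·(x3−x2)/(m1−m2) + a·m1·m2·(x3−x2)/[(ȳ3−ȳ2) − a·(m1−m2)], and θ̂2 = (ȳ3−ȳ2)/(m1−m2) − a. Then xᵢ + θ̂2 > 0 for each support point x1 = a, x2, x3, and ȳᵢ = θ̂0 + θ̂1·xᵢ/(xᵢ+θ̂2) for i = 1, 2, 3. -/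

import Mathlib

/-!
The Emax curve is the hyperbola `θ₀ + θ₁ - θ₁θ₂ / (x + θ₂)`, so its chord slope between `a` and `x`
is `θ₁θ₂ / ((a + θ₂)(x + θ₂))`. Equating this with `m₁` at `x₂` and with `m₂` at `x₃` forces
`(m₁ - m₂)(a + θ₂) = ȳ₃ - ȳ₂ > 0`, whence every `xᵢ + θ₂ > 0`, and then
`x₂ + θ₂ = m₂ (x₃ - x₂) / (m₁ - m₂)` and `x₃ + θ₂ = m₁ (x₃ - x₂) / (m₁ - m₂)`. Both slope conditions
thus ask for the same product `θ₁θ₂ = m₁m₂(x₃ - x₂)(a + θ₂) / (m₁ - m₂)`, and the stated `θ₀, θ₁`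
are the values giving this product together with `η(a) = ȳ₁`.
-/

noncomputable def emax (θ0 θ1 θ2 x : ℝ) : ℝ := θ0 + θ1 * x / (x + θ2)

theorem emax_sub_emax {θ0 θ1 θ2 x x' : ℝ} (hx : x + θ2 ≠ 0) (hx' : x' + θ2 ≠ 0) :
    emax θ0 θ1 θ2 x - emax θ0 θ1 θ2 x' = θ1 * θ2 * (x - x') / ((x + θ2) * (x' + θ2)) := by
  unfold emax
  field_simp
  ring

theorem emax_eq_of_chord_slope {θ0 θ1 θ2 a x y m : ℝ} (ha : a + θ2 ≠ 0) (hx : x + θ2 ≠ 0)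
    (hslope : θ1 * θ2 = m * (a + θ2) * (x + θ2)) (hy : y = emax θ0 θ1 θ2 a + m * (x - a)) :
    emax θ0 θ1 θ2 x = y := by
  calc emax θ0 θ1 θ2 x
      = emax θ0 θ1 θ2 a + θ1 * θ2 * (x - a) / ((x + θ2) * (a + θ2)) := by
        rw [← emax_sub_emax hx ha]; ring
    _ = y := by rw [hslope, hy]; field_simp

theorem emax_explicit_at_left {a y1 P Δ d : ℝ} (hΔ : Δ ≠ 0) (hd : d ≠ 0) (hden : d - a * Δ ≠ 0) :
    emax (y1 - a * P / (d - a * Δ)) (P / Δ + a * P / (d - a * Δ)) (d / Δ - a) a = y1 ∧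
      (P / Δ + a * P / (d - a * Δ)) * (d / Δ - a) = P / Δ * (a + (d / Δ - a)) := by
  have hθ2 : d / Δ - a = (d - a * Δ) / Δ := by field_simp
  have hden' : d - Δ * a ≠ 0 := by rwa [mul_comm]
  unfold emax
  rw [add_sub_cancel, hθ2]
  constructor <;> field_simp <;> ring

theorem emax_MLE_original_general (a x2 x3 y1 y2 y3 m1 m2 θ0' θ1' θ2' : ℝ)
    (hx1 : a < x2) (hx2 : x2 < x3)
    (hy23 : y2 < y3)
    (hm1 : m1 = (y2 - y1) / (x2 - a)) (hm2 : m2 = (y3 - y1) / (x3 - a))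
    (hm : m1 > m2)
    (hden : (y3 - y2) - a * (m1 - m2) ≠ 0)
    (hθ0 : θ0' = y1 - a * (m1 * m2 * (x3 - x2)) / ((y3 - y2) - a * (m1 - m2)))
    (hθ1 : θ1' = m1 * m2 / (m1 - m2) * (x3 - x2)
                  + a * (m1 * m2 * (x3 - x2)) / ((y3 - y2) - a * (m1 - m2)))
    (hθ2 : θ2' = (y3 - y2) / (m1 - m2) - a) :
    (0 < a + θ2' ∧ 0 < x2 + θ2' ∧ 0 < x3 + θ2') ∧
    (y1 = θ0' + θ1' * a / (a + θ2') ∧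
     y2 = θ0' + θ1' * x2 / (x2 + θ2') ∧
     y3 = θ0' + θ1' * x3 / (x3 + θ2')) := by
  have hΔ : 0 < m1 - m2 := sub_pos.mpr hm
  have hrise2 : m1 * (x2 - a) = y2 - y1 := by rw [hm1]; exact div_mul_cancel₀ _ (by linarith)
  have hrise3 : m2 * (x3 - a) = y3 - y1 := by rw [hm2]; exact div_mul_cancel₀ _ (by linarith)
  have hx2θ : x2 + θ2' = m2 * (x3 - x2) / (m1 - m2) := by
    rw [hθ2, eq_div_iff hΔ.ne']; field_simp; linear_combination hrise2 - hrise3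
  have hx3θ : x3 + θ2' = m1 * (x3 - x2) / (m1 - m2) := by
    rw [hθ2, eq_div_iff hΔ.ne']; field_simp; linear_combination hrise2 - hrise3
  have haθ : 0 < a + θ2' := by rw [hθ2, add_sub_cancel]; exact div_pos (by linarith) hΔ
  have hpos : 0 < a + θ2' ∧ 0 < x2 + θ2' ∧ 0 < x3 + θ2' := ⟨haθ, by linarith, by linarith⟩
  have hθ1' : θ1' = m1 * m2 * (x3 - x2) / (m1 - m2)
      + a * (m1 * m2 * (x3 - x2)) / ((y3 - y2) - a * (m1 - m2)) := by rw [hθ1]; ring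
  obtain ⟨hy1, hslope⟩ := emax_explicit_at_left (y1 := y1) (P := m1 * m2 * (x3 - x2)) hΔ.ne'
    (by linarith) hden
  rw [← hθ1', ← hθ2] at hy1 hslope
  rw [← hθ0] at hy1
  refine ⟨hpos, hy1.symm, (emax_eq_of_chord_slope (m := m1) hpos.1.ne' hpos.2.1.ne' ?_ ?_).symm,
    (emax_eq_of_chord_slope (m := m2) hpos.1.ne' hpos.2.2.ne' ?_ ?_).symm⟩
  · rw [hslope, hx2θ]; ring
  · rw [hy1]; linarith
  · rw [hslope, hx3θ]; ring
  · rw [hy1]; linarith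

/-- Analytic MLE for a three-point design with support `x1 = a < x2 < x3` in the
original parametrization: the stated parameters are admissible and interpolate the
data with increasing concave shape. -/
theorem emax_MLE_original (a x2 x3 y1 y2 y3 m1 m2 θ0' θ1' θ2' : ℝ)
    (hx1 : a < x2) (hx2 : x2 < x3)
    (hy12 : y1 < y2) (hy23 : y2 < y3)
    (hm1 : m1 = (y2 - y1) / (x2 - a)) (hm2 : m2 = (y3 - y1) / (x3 - a))
    (hm : m1 > m2)
    (hden : (y3 - y2) - a * (m1 - m2) ≠ 0)
    (hθ0 : θ0' = y1 - a * (m1 * m2 * (x3 - x2)) / ((y3 - y2) - a * (m1 - m2)))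
    (hθ1 : θ1' = m1 * m2 / (m1 - m2) * (x3 - x2)
                  + a * (m1 * m2 * (x3 - x2)) / ((y3 - y2) - a * (m1 - m2)))
    (hθ2 : θ2' = (y3 - y2) / (m1 - m2) - a) :
    (0 < a + θ2' ∧ 0 < x2 + θ2' ∧ 0 < x3 + θ2') ∧
    (y1 = θ0' + θ1' * a / (a + θ2') ∧
     y2 = θ0' + θ1' * x2 / (x2 + θ2') ∧
     y3 = θ0' + θ1' * x3 / (x3 + θ2')) :=
  emax_MLE_original_general a x2 x3 y1 y2 y3 m1 m2 θ0' θ1' θ2' hx1 hx2 hy23 hm1 hm2 hm hden hθ0 hθ1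
    hθ2
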